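/- Let q₂ ∈ ℂ[x,y,z] be a homogeneous quadratic form, l ∈ ℂ[x,y,z] a homogeneous linear form, and α ∈ ℂ. If q₂ is not the square of a linear form, then there exist b, c ∈ ℂ such that the quadratic form in the three variables y, z, t given by ψ₂ = q₂(b·y + c·z, y, z) + t·l(b·y + c·z, y, z) + α·t² is not the square of a linear form in y, z, t. -/

import Mathlib

open MvPolynomial

/-!
If every section `ψ₂` were a square, so would be its restriction to `t = 0`, the binary form
`q₂(by + cz, y, z)`, whose discriminant therefore vanishes for all `b, c`. This discriminant is a
polynomial in `b, c` whose coefficients are the `2 × 2` minors of the symmetric matrix of `q₂`;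
hence `q₂` has rank at most one, and over an algebraically closed field it is then the square of
a linear form.
-/

section TernaryQuadratic

variable {R : Type*} [CommSemiring R]

noncomputable def ternaryQuadratic (a₀ a₁ a₂ a₀₁ a₀₂ a₁₂ : R) : MvPolynomial (Fin 3) R :=
  C a₀ * X 0 ^ 2 + C a₁ * X 1 ^ 2 + C a₂ * X 2 ^ 2
    + C a₀₁ * (X 0 * X 1) + C a₀₂ * (X 0 * X 2) + C a₁₂ * (X 1 * X 2)

lemma isHomogeneous_ternaryQuadratic (a₀ a₁ a₂ a₀₁ a₀₂ a₁₂ : R) :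
    (ternaryQuadratic a₀ a₁ a₂ a₀₁ a₀₂ a₁₂).IsHomogeneous 2 := by
  have hsq (i : Fin 3) : (X i ^ 2 : MvPolynomial (Fin 3) R).IsHomogeneous 2 :=
    isHomogeneous_X_pow i 2
  have hmul (i j : Fin 3) : (X i * X j : MvPolynomial (Fin 3) R).IsHomogeneous 2 :=
    (isHomogeneous_X R i).mul (isHomogeneous_X R j)
  exact ((((((hsq 0).C_mul a₀).add ((hsq 1).C_mul a₁)).add ((hsq 2).C_mul a₂)).add
    ((hmul 0 1).C_mul a₀₁)).add ((hmul 0 2).C_mul a₀₂)).add ((hmul 1 2).C_mul a₁₂)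

lemma MvPolynomial.IsHomogeneous.exists_eq_ternaryQuadratic {q : MvPolynomial (Fin 3) R}
    (hq : q.IsHomogeneous 2) :
    ∃ a₀ a₁ a₂ a₀₁ a₀₂ a₁₂ : R, q = ternaryQuadratic a₀ a₁ a₂ a₀₁ a₀₂ a₁₂ := by
  refine ⟨coeff (Finsupp.single 0 2) q, coeff (Finsupp.single 1 2) q,
    coeff (Finsupp.single 2 2) q, coeff (Finsupp.single 0 1 + Finsupp.single 1 1) q,
    coeff (Finsupp.single 0 1 + Finsupp.single 2 1) q,
    coeff (Finsupp.single 1 1 + Finsupp.single 2 1) q, ?_⟩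
  ext m
  by_cases hm : m.degree = 2
  · rw [← Finsupp.univ_sum_single m, Fin.sum_univ_three] at hm ⊢
    generalize m 0 = i, m 1 = j, m 2 = k at hm ⊢
    simp only [map_add, Finsupp.degree_single] at hm
    obtain ⟨rfl, rfl, rfl⟩ | ⟨rfl, rfl, rfl⟩ | ⟨rfl, rfl, rfl⟩ | ⟨rfl, rfl, rfl⟩ | ⟨rfl, rfl, rfl⟩ |
        ⟨rfl, rfl, rfl⟩ : (i = 2 ∧ j = 0 ∧ k = 0) ∨ (i = 0 ∧ j = 2 ∧ k = 0) ∨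
        (i = 0 ∧ j = 0 ∧ k = 2) ∨ (i = 1 ∧ j = 1 ∧ k = 0) ∨ (i = 1 ∧ j = 0 ∧ k = 1) ∨
        (i = 0 ∧ j = 1 ∧ k = 1) := by omega
    all_goals simp [ternaryQuadratic, X, monomial_pow, monomial_mul, coeff_C_mul, coeff_monomial,
      Finsupp.ext_iff, Fin.forall_fin_succ]
  · rw [hq.coeff_eq_zero hm, (isHomogeneous_ternaryQuadratic ..).coeff_eq_zero hm]

lemma ternaryQuadratic_sq_coeffs (u v w : R) :
    ternaryQuadratic (u ^ 2) (v ^ 2) (w ^ 2) (2 * u * v) (2 * u * w) (2 * v * w)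
      = (C u * X 0 + C v * X 1 + C w * X 2) ^ 2 := by
  simp only [ternaryQuadratic, map_pow, map_mul, map_ofNat]
  ring

end TernaryQuadratic

lemma discriminant_eq_zero_of_section_eq_sq {R : Type*} [CommRing R]
    {a₀ a₁ a₂ a₀₁ a₀₂ a₁₂ b c u v w α : R} {P : MvPolynomial (Fin 3) R}
    (h : aeval ![C b * X 0 + C c * X 1, X 0, X 1] (ternaryQuadratic a₀ a₁ a₂ a₀₁ a₀₂ a₁₂)
        + X 2 * P + C α * X 2 ^ 2 = (C u * X 0 + C v * X 1 + C w * X 2) ^ 2) :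
    (2 * a₀ * b * c + a₀₂ * b + a₀₁ * c + a₁₂) ^ 2
      = 4 * (a₀ * b ^ 2 + a₀₁ * b + a₁) * (a₀ * c ^ 2 + a₀₂ * c + a₂) := by
  have hy := congrArg (eval ![1, 0, 0]) h
  have hz := congrArg (eval ![0, 1, 0]) h
  have hyz := congrArg (eval ![1, 1, 0]) h
  simp only [Fin.isValue, aeval_eq_bind₁, ternaryQuadratic, map_add, map_mul, algHom_C,
    algebraMap_eq, map_pow, bind₁_X_right, Matrix.cons_val_zero, Matrix.cons_val_one,
    Matrix.cons_val, eval_C, eval_X, mul_one, mul_zero, add_zero, one_pow, ne_eq,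
    OfNat.ofNat_ne_zero, not_false_eq_true, zero_pow, zero_mul, zero_add] at hy hz hyz
  have hcross : 2 * a₀ * b * c + a₀₂ * b + a₀₁ * c + a₁₂ = 2 * u * v := by
    linear_combination hyz - hy - hz
  linear_combination (2 * a₀ * b * c + a₀₂ * b + a₀₁ * c + a₁₂ + 2 * u * v) * hcross
    - 4 * v ^ 2 * hy - 4 * (a₀ * b ^ 2 + a₀₁ * b + a₁) * hz

section Field

variable {K : Type*} [Field K] [CharZero K] {a₀ a₁ a₂ a₀₁ a₀₂ a₁₂ : K}

lemma minors_eq_zero_of_forall_discriminant_eq_zero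
    (h : ∀ b c : K, (2 * a₀ * b * c + a₀₂ * b + a₀₁ * c + a₁₂) ^ 2
      = 4 * (a₀ * b ^ 2 + a₀₁ * b + a₁) * (a₀ * c ^ 2 + a₀₂ * c + a₂)) :
    a₀₁ ^ 2 = 4 * a₀ * a₁ ∧ a₀₂ ^ 2 = 4 * a₀ * a₂ ∧ a₁₂ ^ 2 = 4 * a₁ * a₂
      ∧ 2 * a₀ * a₁₂ = a₀₁ * a₀₂ :=
  -- the coefficients of `c²`, `b²`, `1` and `bc`, read off from `b, c ∈ {0, ±1}`
  ⟨by linear_combination (h 0 1 + h 0 (-1)) / 2 - h 0 0,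
    by linear_combination (h 1 0 + h (-1) 0) / 2 - h 0 0,
    by linear_combination h 0 0,
    by linear_combination (h 1 1 - h 1 (-1) - h (-1) 1 + h (-1) (-1)) / 8⟩

variable [IsAlgClosed K]

lemma exists_sq_of_sq_eq_four_mul (h : a₁₂ ^ 2 = 4 * a₁ * a₂) :
    ∃ v w : K, a₁ = v ^ 2 ∧ a₂ = w ^ 2 ∧ a₁₂ = 2 * v * w := by
  obtain ⟨v, rfl⟩ := IsAlgClosed.exists_pow_nat_eq a₁ two_pos
  by_cases hv : v = 0
  · subst hv
    obtain ⟨w, rfl⟩ := IsAlgClosed.exists_pow_nat_eq a₂ two_pos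
    exact ⟨0, w, by ring, rfl, by simpa using h⟩
  · refine ⟨v, a₁₂ / (2 * v), rfl, ?_, by field_simp⟩
    field_simp
    linear_combination -h

lemma exists_sq_of_minors_eq_zero (h₀₁ : a₀₁ ^ 2 = 4 * a₀ * a₁) (h₀₂ : a₀₂ ^ 2 = 4 * a₀ * a₂)
    (h₁₂ : a₁₂ ^ 2 = 4 * a₁ * a₂) (h : 2 * a₀ * a₁₂ = a₀₁ * a₀₂) :
    ∃ u v w : K, a₀ = u ^ 2 ∧ a₁ = v ^ 2 ∧ a₂ = w ^ 2
      ∧ a₀₁ = 2 * u * v ∧ a₀₂ = 2 * u * w ∧ a₁₂ = 2 * v * w := by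
  obtain ⟨u, rfl⟩ := IsAlgClosed.exists_pow_nat_eq a₀ two_pos
  by_cases hu : u = 0
  · subst hu
    obtain ⟨v, w, rfl, rfl, rfl⟩ := exists_sq_of_sq_eq_four_mul h₁₂
    exact ⟨0, v, w, by ring, rfl, rfl, by simpa using h₀₁, by simpa using h₀₂, rfl⟩
  · refine ⟨u, a₀₁ / (2 * u), a₀₂ / (2 * u), rfl, ?_, ?_, by field_simp, by field_simp, ?_⟩
    · field_simp
      linear_combination -h₀₁
    · field_simp
      linear_combination -h₀₂
    · field_simp
      linear_combination h

end Field

theorem section_quadratic_not_square_general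
    (q₂ l : MvPolynomial (Fin 3) ℂ) (α : ℂ)
    (hq₂ : q₂.IsHomogeneous 2)
    (hns : ¬ ∃ u v w : ℂ,
      q₂ = (MvPolynomial.C u * X 0 + MvPolynomial.C v * X 1
            + MvPolynomial.C w * X 2) ^ 2) :
    ∃ b c : ℂ, ¬ ∃ u v w : ℂ,
      (aeval ![MvPolynomial.C b * X 0 + MvPolynomial.C c * X 1,
               (X 0 : MvPolynomial (Fin 3) ℂ), X 1] q₂)
        + X 2 * (aeval ![MvPolynomial.C b * X 0 + MvPolynomial.C c * X 1,
               (X 0 : MvPolynomial (Fin 3) ℂ), X 1] l)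
        + MvPolynomial.C α * X 2 ^ 2
        = (MvPolynomial.C u * X 0 + MvPolynomial.C v * X 1
            + MvPolynomial.C w * X 2) ^ 2 := by
  by_contra! hsec
  obtain ⟨a₀, a₁, a₂, a₀₁, a₀₂, a₁₂, rfl⟩ := hq₂.exists_eq_ternaryQuadratic
  obtain ⟨h₀₁, h₀₂, h₁₂, h⟩ := minors_eq_zero_of_forall_discriminant_eq_zero fun b c ↦ by
    obtain ⟨u, v, w, hsq⟩ := hsec b c
    exact discriminant_eq_zero_of_section_eq_sq hsq
  obtain ⟨u, v, w, rfl, rfl, rfl, rfl, rfl, rfl⟩ := exists_sq_of_minors_eq_zero h₀₁ h₀₂ h₁₂ h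
  exact hns ⟨u, v, w, ternaryQuadratic_sq_coeffs u v w⟩

/-- Lemma 4.4 (algebraic content): if the quadratic part `q₂` of a `cA_n` singularity is
not the square of a linear form, then for some `b, c` the quadratic part
`ψ₂ = q₂(by+cz, y, z) + t·l(by+cz, y, z) + α·t²` of the hyperplane section `x = by + cz`
is not the square of a linear form in `y, z, t`.
Variables: `x = X 0`, `y = X 1`, `z = X 2` in the source ring; `y = X 0`, `z = X 1`,
`t = X 2` in the target ring. -/
theorem section_quadratic_not_square
    (q₂ l : MvPolynomial (Fin 3) ℂ) (α : ℂ)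
    (hq₂ : q₂.IsHomogeneous 2) (hl : l.IsHomogeneous 1)
    (hns : ¬ ∃ u v w : ℂ,
      q₂ = (MvPolynomial.C u * X 0 + MvPolynomial.C v * X 1
            + MvPolynomial.C w * X 2) ^ 2) :
    ∃ b c : ℂ, ¬ ∃ u v w : ℂ,
      (aeval ![MvPolynomial.C b * X 0 + MvPolynomial.C c * X 1,
               (X 0 : MvPolynomial (Fin 3) ℂ), X 1] q₂)
        + X 2 * (aeval ![MvPolynomial.C b * X 0 + MvPolynomial.C c * X 1,
               (X 0 : MvPolynomial (Fin 3) ℂ), X 1] l)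
        + MvPolynomial.C α * X 2 ^ 2
        = (MvPolynomial.C u * X 0 + MvPolynomial.C v * X 1
            + MvPolynomial.C w * X 2) ^ 2 :=
  section_quadratic_not_square_general q₂ l α hq₂ hns
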